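/- In the Yang-Mills Lie algebra 𝔶𝔪(3) with generators x_1, x_2, x_3, writing x_{ijk} = [x_i,[x_j,x_k]], the relations x_{332} = −x_{112}, x_{331} = −x_{221}, x_{223} = −x_{113}, and x_{213} = x_{123} + x_{312} hold. Consequently the degree-3 component 𝔶𝔪(3)_3 is spanned by x_{112}, x_{221}, x_{113}, x_{123}, x_{312}. -/
import Mathlib


/-- The ideal of the Yang-Mills relations `Σᵢ ⁅xᵢ, ⁅xᵢ, xⱼ⁆⁆`, `j = 1, 2, 3`, in the free
Lie algebra on three generators. -/
noncomputable def ymIdeal3 (k : Type*) [Field k] : LieIdeal k (FreeLieAlgebra k (Fin 3)) :=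
  LieSubmodule.lieSpan k _
    {z | ∃ j : Fin 3, z = ∑ i : Fin 3,
      ⁅FreeLieAlgebra.of k i, ⁅FreeLieAlgebra.of k i, FreeLieAlgebra.of k j⁆⁆}

/-- The Yang-Mills Lie algebra `𝔶𝔪(3)` on three generators. -/
noncomputable abbrev YangMills3 (k : Type*) [Field k] : Type _ :=
  FreeLieAlgebra k (Fin 3) ⧸ ymIdeal3 k

/-- The generators `x₁, x₂, x₃` of `𝔶𝔪(3)`. -/
noncomputable def ymGen (k : Type*) [Field k] (i : Fin 3) : YangMills3 k :=
  LieSubmodule.Quotient.mk (N := ymIdeal3 k) (FreeLieAlgebra.of k i)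

/-- The triple brackets `x_{ijk} = ⁅xᵢ, ⁅xⱼ, xₖ⁆⁆` in `𝔶𝔪(3)` (indices `1,2,3 ↦ 0,1,2`). -/
noncomputable def ymTriple (k : Type*) [Field k] (i j l : Fin 3) : YangMills3 k :=
  ⁅ymGen k i, ⁅ymGen k j, ymGen k l⁆⁆

lemma ymTriple_same (k : Type*) [Field k] (i j : Fin 3) : ymTriple k i j j = 0 := by
  simp [ymTriple]

lemma ymTriple_skew (k : Type*) [Field k] (i j l : Fin 3) :
    ymTriple k i l j = -ymTriple k i j l := by
  rw [ymTriple, ymTriple, ← lie_skew (ymGen k j), lie_neg, neg_neg]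

lemma ymSum (k : Type*) [Field k] (j : Fin 3) : ∑ i : Fin 3, ymTriple k i i j = 0 := by
  have h : (∑ i : Fin 3, ⁅FreeLieAlgebra.of k i, ⁅FreeLieAlgebra.of k i,
      FreeLieAlgebra.of k j⁆⁆) ∈ ymIdeal3 k := LieSubmodule.subset_lieSpan ⟨j, rfl⟩
  have h0 : (LieSubmodule.Quotient.mk (N := ymIdeal3 k) (∑ i : Fin 3,
      ⁅FreeLieAlgebra.of k i, ⁅FreeLieAlgebra.of k i, FreeLieAlgebra.of k j⁆⁆)) = 0 :=
    (LieSubmodule.Quotient.mk_eq_zero _).mpr h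
  rw [← h0]
  simp only [ymTriple, ymGen, ← LieSubmodule.Quotient.mk_bracket]
  exact (map_sum ((ymIdeal3 k).toSubmodule.mkQ) _ _).symm

lemma ymRel (k : Type*) [Field k] (j : Fin 3) :
    ymTriple k 0 0 j + ymTriple k 1 1 j + ymTriple k 2 2 j = 0 := by
  have := ymSum k j
  rwa [Fin.sum_univ_three] at this


/-- In `𝔶𝔪(3)` the relations `x₃₃₂ = −x₁₁₂`, `x₃₃₁ = −x₂₂₁`, `x₂₂₃ = −x₁₁₃` and
`x₂₁₃ = x₁₂₃ + x₃₁₂` hold; consequently every triple bracket `x_{ijk}` lies in the span of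
`x₁₁₂, x₂₂₁, x₁₁₃, x₁₂₃, x₃₁₂`, i.e. the degree-3 component of `𝔶𝔪(3)` is spanned by these
five elements. -/
theorem yangMills3_degree3_relations (k : Type*) [Field k] [CharZero k] :
    ymTriple k 2 2 1 = -ymTriple k 0 0 1 ∧
    ymTriple k 2 2 0 = -ymTriple k 1 1 0 ∧
    ymTriple k 1 1 2 = -ymTriple k 0 0 2 ∧
    ymTriple k 1 0 2 = ymTriple k 0 1 2 + ymTriple k 2 0 1 ∧
    ∀ i j l : Fin 3, ymTriple k i j l ∈ Submodule.span k
      {ymTriple k 0 0 1, ymTriple k 1 1 0, ymTriple k 0 0 2,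
       ymTriple k 0 1 2, ymTriple k 2 0 1} := by
  have r1 : ymTriple k 2 2 1 = -ymTriple k 0 0 1 := by
    have h := ymRel k 1
    rw [ymTriple_same, add_zero] at h
    exact eq_neg_of_add_eq_zero_right h
  have r2 : ymTriple k 2 2 0 = -ymTriple k 1 1 0 := by
    have h := ymRel k 0
    rw [ymTriple_same, zero_add] at h
    exact eq_neg_of_add_eq_zero_right h
  have r3 : ymTriple k 1 1 2 = -ymTriple k 0 0 2 := by
    have h := ymRel k 2
    rw [ymTriple_same, add_zero] at h
    exact eq_neg_of_add_eq_zero_right h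
  have r4 : ymTriple k 1 0 2 = ymTriple k 0 1 2 + ymTriple k 2 0 1 := by
    simp only [ymTriple]
    rw [leibniz_lie, add_comm]
    congr 1
    rw [← lie_skew (ymGen k 2), ← lie_skew (ymGen k 1), neg_lie]
  refine ⟨r1, r2, r3, r4, ?_⟩
  set S : Set (YangMills3 k) :=
    {ymTriple k 0 0 1, ymTriple k 1 1 0, ymTriple k 0 0 2,
     ymTriple k 0 1 2, ymTriple k 2 0 1} with hS
  have m1 : ymTriple k 0 0 1 ∈ Submodule.span k S := Submodule.subset_span (by simp [hS])
  have m2 : ymTriple k 1 1 0 ∈ Submodule.span k S := Submodule.subset_span (by simp [hS])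
  have m3 : ymTriple k 0 0 2 ∈ Submodule.span k S := Submodule.subset_span (by simp [hS])
  have m4 : ymTriple k 0 1 2 ∈ Submodule.span k S := Submodule.subset_span (by simp [hS])
  have m5 : ymTriple k 2 0 1 ∈ Submodule.span k S := Submodule.subset_span (by simp [hS])
  have mem_of_eq : ∀ {a b : YangMills3 k}, a = b → b ∈ Submodule.span k S →
      a ∈ Submodule.span k S := fun h hb => h ▸ hb
  have z := fun i j => mem_of_eq (ymTriple_same k i j) (Submodule.zero_mem _)
  intro i j l
  fin_cases i <;> fin_cases j <;> fin_cases l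
  · exact z 0 0
  · exact m1
  · exact m3
  · exact mem_of_eq (ymTriple_skew k 0 0 1) (Submodule.neg_mem _ m1)
  · exact z 0 1
  · exact m4
  · exact mem_of_eq (ymTriple_skew k 0 0 2) (Submodule.neg_mem _ m3)
  · exact mem_of_eq (ymTriple_skew k 0 1 2) (Submodule.neg_mem _ m4)
  · exact z 0 2
  · exact z 1 0
  · exact mem_of_eq (ymTriple_skew k 1 1 0) (Submodule.neg_mem _ m2)
  · exact mem_of_eq r4 (Submodule.add_mem _ m4 m5)
  · exact m2
  · exact z 1 1
  · exact mem_of_eq r3 (Submodule.neg_mem _ m3)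
  · exact mem_of_eq ((ymTriple_skew k 1 0 2).trans (congrArg Neg.neg r4))
      (Submodule.neg_mem _ (Submodule.add_mem _ m4 m5))
  · exact mem_of_eq ((ymTriple_skew k 1 1 2).trans (congrArg Neg.neg r3))
      (Submodule.neg_mem _ (Submodule.neg_mem _ m3))
  · exact z 1 2
  · exact z 2 0
  · exact m5
  · exact mem_of_eq ((ymTriple_skew k 2 2 0).trans (congrArg Neg.neg r2))
      (Submodule.neg_mem _ (Submodule.neg_mem _ m2))
  · exact mem_of_eq (ymTriple_skew k 2 0 1) (Submodule.neg_mem _ m5)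
  · exact z 2 1
  · exact mem_of_eq ((ymTriple_skew k 2 2 1).trans (congrArg Neg.neg r1))
      (Submodule.neg_mem _ (Submodule.neg_mem _ m1))
  · exact mem_of_eq r2 (Submodule.neg_mem _ m2)
  · exact mem_of_eq r1 (Submodule.neg_mem _ m1)
  · exact z 2 2
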